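/- Let 𝔬 be an acyclic orientation of a finite graph on n vertices with s sinks, and let ω be a labeling decreasing along directed paths with sinks labeled 1,…,s. For any subset S of sinks with 1 ∉ ω(S) and |S| = k−1, there exists exactly one permutation σ ∈ L'(𝔬,ω) whose final k−1 entries are the labels ω(S) in increasing order preceded by the entry 1, with the first n−k entries strictly decreasing; this gives a bijection between (k−1)-subsets of the sinks other than the minimally-labeled sink and permutations in L'(𝔬,ω) with descent set {1,…,n−k}. -/
import Mathlib


/-- A vertex is a sink of the orientation `r` if it has no outgoing directed edge. -/
def IsSink {V : Type} (r : V → V → Prop) (v : V) : Prop := ∀ u : V, ¬ r v u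

/-- The descent set of a word `σ : Fin n → Fin n` (0-indexed). -/
def Des {n : ℕ} (σ : Fin n → Fin n) : Set ℕ :=
  {i | ∃ hi : i + 1 < n, σ ⟨i + 1, hi⟩ < σ ⟨i, Nat.lt_of_succ_lt hi⟩}

/-- `σ` belongs to `L'(𝔬, ω)`. -/
def InLE {V : Type} {n : ℕ} (r : V → V → Prop) (ω : V ≃ Fin n) (σ : Equiv.Perm (Fin n)) :
    Prop :=
  ∀ i j : Fin n, Relation.TransGen r (ω.symm (σ i)) (ω.symm (σ j)) → i < j

lemma sink_not_transGen {V : Type} {r : V → V → Prop} {v u : V} (h : IsSink r v) :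
    ¬ Relation.TransGen r v u := by
  intro ht
  induction ht with
  | single h' => exact h _ h'
  | tail _ _ ih => exact ih

def buildF (n k : ℕ) (hn0 : 0 < n) (hk : 1 ≤ k) (hkn : k ≤ n)
    (C T : Finset (Fin n)) (hC : C.card = n - k) (hT : T.card = k - 1) :
    Fin n → Fin n := fun i =>
  if h : (i : ℕ) < n - k then C.orderEmbOfFin hC ⟨n - k - 1 - (i : ℕ), by omega⟩
  else if h2 : (i : ℕ) = n - k then ⟨0, hn0⟩
  else T.orderEmbOfFin hT ⟨(i : ℕ) - (n - k) - 1, by have := i.isLt; omega⟩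

lemma buildF_lt {n k : ℕ} (hn0 : 0 < n) (hk : 1 ≤ k) (hkn : k ≤ n)
    (C T : Finset (Fin n)) (hC : C.card = n - k) (hT : T.card = k - 1)
    (i : Fin n) (hi : (i : ℕ) < n - k) :
    buildF n k hn0 hk hkn C T hC hT i = C.orderEmbOfFin hC ⟨n - k - 1 - (i : ℕ), by omega⟩ := by
  unfold buildF; rw [dif_pos hi]

lemma buildF_mid {n k : ℕ} (hn0 : 0 < n) (hk : 1 ≤ k) (hkn : k ≤ n)
    (C T : Finset (Fin n)) (hC : C.card = n - k) (hT : T.card = k - 1)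
    (i : Fin n) (hi : (i : ℕ) = n - k) :
    buildF n k hn0 hk hkn C T hC hT i = ⟨0, hn0⟩ := by
  unfold buildF; rw [dif_neg (by omega), dif_pos hi]

lemma buildF_gt {n k : ℕ} (hn0 : 0 < n) (hk : 1 ≤ k) (hkn : k ≤ n)
    (C T : Finset (Fin n)) (hC : C.card = n - k) (hT : T.card = k - 1)
    (i : Fin n) (hi : n - k < (i : ℕ)) :
    buildF n k hn0 hk hkn C T hC hT i
      = T.orderEmbOfFin hT ⟨(i : ℕ) - (n - k) - 1, by have := i.isLt; omega⟩ := by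
  unfold buildF; rw [dif_neg (by omega), dif_neg (by omega)]


/-- The bijection between `(k-1)`-subsets `S` of the sinks avoiding the minimally labeled sink
and permutations in `L'(𝔬, ω)` with descent set `{1,…,n-k}`: for each such `S` there is exactly
one `σ ∈ L'(𝔬, ω)` decreasing on the first `n-k` positions, with entry `1` (0-indexed: `0`)
at position `n-k` followed by the labels of `S` in increasing order; and conversely every
`σ ∈ L'(𝔬, ω)` with descent set `{1,…,n-k}` arises from exactly one such `S`. -/
theorem stmt16 {V : Type} [Fintype V] [DecidableEq V] (G : SimpleGraph V) (r : V → V → Prop)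
    (h1 : ∀ u v : V, r u v → G.Adj u v)
    (h2 : ∀ u v : V, G.Adj u v → r u v ∨ r v u)
    (h3 : ∀ u v : V, ¬(r u v ∧ r v u))
    (hacyc : ∀ v : V, ¬ Relation.TransGen r v v)
    (n : ℕ) (hn : Fintype.card V = n) (ω : V ≃ Fin n)
    (hdec : ∀ u v : V, Relation.TransGen r u v → (ω v : ℕ) < (ω u : ℕ))
    (s : ℕ) (hs : s = Nat.card {v : V // IsSink r v})
    (hmin : ∀ v : V, IsSink r v → (ω v : ℕ) < s)
    (k : ℕ) (hk : 1 ≤ k) (hkn : k ≤ n) :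
    (∀ S : Finset V, (∀ v ∈ S, IsSink r v) → (∀ v ∈ S, (ω v : ℕ) ≠ 0) → S.card = k - 1 →
      ∃! σ : Equiv.Perm (Fin n), InLE r ω σ ∧
        (∀ i j : Fin n, i < j → (j : ℕ) ≤ n - k → σ j < σ i) ∧
        σ ⟨n - k, by omega⟩ = ⟨0, by omega⟩ ∧
        (∀ i j : Fin n, n - k ≤ (i : ℕ) → i < j → σ i < σ j) ∧
        (∀ i : Fin n, n - k < (i : ℕ) → ω.symm (σ i) ∈ S)) ∧
    (∀ σ : Equiv.Perm (Fin n),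
      InLE r ω σ → Des (σ : Fin n → Fin n) = {i | i < n - k} →
      ∃! S : Finset V, (∀ v ∈ S, IsSink r v) ∧ (∀ v ∈ S, (ω v : ℕ) ≠ 0) ∧ S.card = k - 1 ∧
        ∀ i : Fin n, n - k < (i : ℕ) → ω.symm (σ i) ∈ S) := by
  have hn0 : 0 < n := by omega
  have hsink0 : IsSink r (ω.symm ⟨0, hn0⟩) := by
    intro u hu
    have := hdec _ _ (Relation.TransGen.single hu)
    rw [Equiv.apply_symm_apply] at this
    simp at this
  constructor
  · -- Part 1
    intro S hsink hS0 hScard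
    set T : Finset (Fin n) := S.image ω with hTdef
    have hTcard : T.card = k - 1 := by
      rw [hTdef, Finset.card_image_of_injective _ ω.injective, hScard]
    have h0T : (⟨0, hn0⟩ : Fin n) ∉ T := by
      rw [hTdef]
      simp only [Finset.mem_image]
      rintro ⟨v, hv, hveq⟩
      exact hS0 v hv (by rw [hveq])
    set C : Finset (Fin n) := Finset.univ \ insert ⟨0, hn0⟩ T with hCdef
    have hCcard : C.card = n - k := by
      rw [hCdef, Finset.card_sdiff_of_subset (Finset.subset_univ _),
        Finset.card_insert_of_notMem h0T, hTcard, Finset.card_univ, Fintype.card_fin]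
      omega
    have hCmem : ∀ x ∈ C, x ≠ (⟨0, hn0⟩ : Fin n) ∧ x ∉ T := by
      intro x hx
      rw [hCdef, Finset.mem_sdiff, Finset.mem_insert] at hx
      push_neg at hx
      exact hx.2
    set f : Fin n → Fin n := buildF n k hn0 hk hkn C T hCcard hTcard with hfdef
    have hfC : ∀ i : Fin n, (i : ℕ) < n - k → f i ∈ C := by
      intro i hi
      rw [hfdef, buildF_lt hn0 hk hkn C T hCcard hTcard i hi]
      exact Finset.orderEmbOfFin_mem _ _ _
    have hfT : ∀ i : Fin n, n - k < (i : ℕ) → f i ∈ T := by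
      intro i hi
      rw [hfdef, buildF_gt hn0 hk hkn C T hCcard hTcard i hi]
      exact Finset.orderEmbOfFin_mem _ _ _
    have hfmid : ∀ i : Fin n, (i : ℕ) = n - k → f i = ⟨0, hn0⟩ := fun i hi =>
      buildF_mid hn0 hk hkn C T hCcard hTcard i hi
    -- injectivity
    have hfinj : Function.Injective f := by
      intro i j hij
      rcases lt_trichotomy ((i : ℕ)) (n - k) with hi | hi | hi <;>
        rcases lt_trichotomy ((j : ℕ)) (n - k) with hj | hj | hj
      · rw [hfdef, buildF_lt hn0 hk hkn C T hCcard hTcard i hi,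
          buildF_lt hn0 hk hkn C T hCcard hTcard j hj] at hij
        have := (C.orderEmbOfFin hCcard).injective hij
        have := Fin.mk.injEq .. ▸ this
        apply Fin.ext
        have h' : n - k - 1 - (i : ℕ) = n - k - 1 - (j : ℕ) := by
          simpa using this
        omega
      · exact absurd ((hfmid j hj) ▸ hij ▸ rfl) (fun h => (hCmem _ (hfC i hi)).1 h)
      · exact absurd (hij ▸ hfT j hj) (hCmem _ (hfC i hi)).2
      · exact absurd ((hfmid i hi) ▸ hij.symm ▸ rfl) (fun h => (hCmem _ (hfC j hj)).1 h)
      · exact Fin.ext (hi.trans hj.symm)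
      · exact absurd ((hfmid i hi) ▸ hij ▸ hfT j hj) h0T
      · exact absurd (hij.symm ▸ hfT i hi) (hCmem _ (hfC j hj)).2
      · exact absurd ((hfmid j hj) ▸ hij.symm ▸ hfT i hi) h0T
      · rw [hfdef, buildF_gt hn0 hk hkn C T hCcard hTcard i hi,
          buildF_gt hn0 hk hkn C T hCcard hTcard j hj] at hij
        have := (T.orderEmbOfFin hTcard).injective hij
        apply Fin.ext
        have h' : (i : ℕ) - (n - k) - 1 = (j : ℕ) - (n - k) - 1 := by
          simpa using this
        omega
    set σ : Equiv.Perm (Fin n) := Equiv.ofBijective f (Finite.injective_iff_bijective.mp hfinj)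
      with hσdef
    have hσf : ∀ i, σ i = f i := fun i => rfl
    -- the four structural properties, stated for f
    have hdecr : ∀ i j : Fin n, i < j → (j : ℕ) ≤ n - k → f j < f i := by
      intro i j hij hjle
      rcases eq_or_lt_of_le hjle with hj | hj
      · rw [hfmid j hj]
        have hi : (i : ℕ) < n - k := by
          have := Fin.lt_def.mp hij; omega
        have := (hCmem _ (hfC i hi)).1
        rw [Fin.lt_def]
        simp only []
        rcases Nat.eq_zero_or_pos ((f i : ℕ)) with h0 | h0
        · exact absurd (Fin.ext h0) this
        · exact h0
      · have hi : (i : ℕ) < n - k := lt_trans (Fin.lt_def.mp hij) hj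
        rw [hfdef, buildF_lt hn0 hk hkn C T hCcard hTcard i hi,
          buildF_lt hn0 hk hkn C T hCcard hTcard j hj]
        apply (C.orderEmbOfFin hCcard).strictMono
        rw [Fin.mk_lt_mk]
        have := Fin.lt_def.mp hij
        omega
    have hincr : ∀ i j : Fin n, n - k ≤ (i : ℕ) → i < j → f i < f j := by
      intro i j hile hij
      have hj : n - k < (j : ℕ) := lt_of_le_of_lt hile (Fin.lt_def.mp hij)
      rcases eq_or_lt_of_le hile with hi | hi
      · rw [hfmid i hi.symm]
        have := hfT j hj
        rw [Fin.lt_def]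
        rcases Nat.eq_zero_or_pos ((f j : ℕ)) with h0 | h0
        · exact absurd ((Fin.ext h0 : f j = ⟨0, hn0⟩) ▸ this) h0T
        · exact h0
      · rw [hfdef, buildF_gt hn0 hk hkn C T hCcard hTcard i hi,
          buildF_gt hn0 hk hkn C T hCcard hTcard j hj]
        apply (T.orderEmbOfFin hTcard).strictMono
        rw [Fin.mk_lt_mk]
        have := Fin.lt_def.mp hij
        omega
    have hmemS : ∀ i : Fin n, n - k < (i : ℕ) → ω.symm (f i) ∈ S := by
      intro i hi
      obtain ⟨v, hv, hveq⟩ := Finset.mem_image.mp (hTdef ▸ hfT i hi)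
      rw [← hveq, Equiv.symm_apply_apply]
      exact hv
    have hLE : InLE r ω σ := by
      intro i j htrans
      simp only [hσf] at htrans
      have hlt := hdec _ _ htrans
      rw [Equiv.apply_symm_apply, Equiv.apply_symm_apply] at hlt
      rcases lt_trichotomy ((i : ℕ)) (n - k) with hi | hi | hi
      · by_contra hij
        push_neg at hij
        rcases eq_or_lt_of_le hij with heq | hlt2
        · exact hacyc _ (heq ▸ htrans)
        · have hjlt : (j : ℕ) < n - k := lt_trans (Fin.lt_def.mp hlt2) hi
          have := hdecr j i hlt2 (le_of_lt hi)
          rw [Fin.lt_def] at this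
          omega
      · exact absurd htrans (by rw [hfmid i hi]; exact sink_not_transGen hsink0)
      · exact absurd htrans (sink_not_transGen (hsink _ (hmemS i hi)))
    refine ⟨σ, ⟨hLE, fun i j hij hjle => hσf j ▸ hσf i ▸ hdecr i j hij hjle,
      hσf _ ▸ hfmid ⟨n - k, by omega⟩ rfl,
      fun i j hile hij => hσf i ▸ hσf j ▸ hincr i j hile hij,
      fun i hi => hσf i ▸ hmemS i hi⟩, ?_⟩
    -- uniqueness
    rintro σ' ⟨-, h2', h3', h4', h5'⟩
    have hσ'T : ∀ i : Fin n, n - k < (i : ℕ) → σ' i = f i := by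
      have hgmem : ∀ a : Fin (k - 1),
          σ' ⟨n - k + 1 + (a : ℕ), by have := a.isLt; omega⟩ ∈ T := by
        intro a
        have hm := h5' ⟨n - k + 1 + (a : ℕ), by have := a.isLt; omega⟩ (by simp; omega)
        show _ ∈ S.image ω
        exact Finset.mem_image.mpr ⟨_, hm, Equiv.apply_symm_apply _ _⟩
      have hgmono : StrictMono (fun a : Fin (k - 1) =>
          σ' ⟨n - k + 1 + (a : ℕ), by have := a.isLt; omega⟩) := by
        intro a b hab
        exact h4' _ _ (by simp; omega) (by rw [Fin.mk_lt_mk]; have := Fin.lt_def.mp hab; omega)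
      have hg := Finset.orderEmbOfFin_unique hTcard hgmem hgmono
      intro i hi
      have ha : i = ⟨n - k + 1 + ((i : ℕ) - (n - k) - 1), by have := i.isLt; omega⟩ :=
        Fin.ext (by simp; omega)
      calc σ' i = σ' ⟨n - k + 1 + ((i : ℕ) - (n - k) - 1), by have := i.isLt; omega⟩ := by
            rw [← ha]
        _ = T.orderEmbOfFin hTcard ⟨(i : ℕ) - (n - k) - 1, by have := i.isLt; omega⟩ := by
            exact congrFun hg ⟨(i : ℕ) - (n - k) - 1, by have := i.isLt; omega⟩
        _ = f i := (buildF_gt hn0 hk hkn C T hCcard hTcard i hi).symm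
    have hσ'mid : σ' ⟨n - k, by omega⟩ = (⟨0, hn0⟩ : Fin n) := h3'
    have hTsurj : ∀ t ∈ T, ∃ i : Fin n, n - k < (i : ℕ) ∧ σ' i = t := by
      intro t ht
      have : t ∈ Set.range (T.orderEmbOfFin hTcard) := by
        rw [Finset.range_orderEmbOfFin]; exact_mod_cast ht
      obtain ⟨a, ha⟩ := this
      refine ⟨⟨n - k + 1 + (a : ℕ), by have := a.isLt; omega⟩, by simp; omega, ?_⟩
      rw [hσ'T _ (by simp; omega), hfdef,
        buildF_gt hn0 hk hkn C T hCcard hTcard _ (by simp; omega)]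
      rw [← ha]
      congr 1
      apply Fin.ext
      simp
      omega
    have hσ'C : ∀ i : Fin n, (i : ℕ) < n - k → σ' i = f i := by
      have hgmem : ∀ a : Fin (n - k), σ' ⟨n - k - 1 - (a : ℕ), by omega⟩ ∈ C := by
        intro a
        have halt := a.isLt
        rw [hCdef, Finset.mem_sdiff, Finset.mem_insert]
        refine ⟨Finset.mem_univ _, ?_⟩
        push_neg
        constructor
        · intro h0
          have := σ'.injective (h0.trans hσ'mid.symm)
          rw [Fin.mk.injEq] at this
          omega
        · intro hmem
          obtain ⟨j, hj, hje⟩ := hTsurj _ hmem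
          have := σ'.injective hje.symm
          rw [Fin.ext_iff] at this
          simp at this
          omega
      have hgmono : StrictMono (fun a : Fin (n - k) => σ' ⟨n - k - 1 - (a : ℕ), by omega⟩) := by
        intro a b hab
        exact h2' _ _ (by rw [Fin.mk_lt_mk]; have := Fin.lt_def.mp hab; have := b.isLt; omega)
          (by simp; omega)
      have hg := Finset.orderEmbOfFin_unique hCcard hgmem hgmono
      intro i hi
      have ha : i = ⟨n - k - 1 - (n - k - 1 - (i : ℕ)), by omega⟩ := Fin.ext (by simp; omega)
      calc σ' i = σ' ⟨n - k - 1 - (n - k - 1 - (i : ℕ)), by omega⟩ := by rw [← ha]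
        _ = C.orderEmbOfFin hCcard ⟨n - k - 1 - (i : ℕ), by omega⟩ :=
            congrFun hg ⟨n - k - 1 - (i : ℕ), by omega⟩
        _ = f i := (buildF_lt hn0 hk hkn C T hCcard hTcard i hi).symm
    apply Equiv.ext
    intro i
    rcases lt_trichotomy ((i : ℕ)) (n - k) with hi | hi | hi
    · rw [hσ'C i hi, hσf]
    · rw [show i = ⟨n - k, by omega⟩ from Fin.ext hi, hσ'mid, hσf,
        hfmid ⟨n - k, by omega⟩ rfl]
    · rw [hσ'T i hi, hσf]
  · -- Part 2
    intro σ hLE hDes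
    have hstep : ∀ (i : ℕ) (h : i + 1 < n), n - k ≤ i →
        σ ⟨i, Nat.lt_of_succ_lt h⟩ < σ ⟨i + 1, h⟩ := by
      intro i h hi
      have hni : i ∉ Des (σ : Fin n → Fin n) := by
        rw [hDes]; simp; omega
      rw [Des, Set.mem_setOf_eq] at hni
      push_neg at hni
      have := hni h
      rcases lt_or_eq_of_le this with h' | h'
      · exact h'
      · exact absurd (σ.injective h') (by simp [Fin.ext_iff])
    have hmono : ∀ i j : Fin n, n - k ≤ (i : ℕ) → i < j → σ i < σ j := by
      have key : ∀ d : ℕ, ∀ i j : Fin n, n - k ≤ (i : ℕ) →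
          (j : ℕ) = (i : ℕ) + d + 1 → σ i < σ j := by
        intro d
        induction d with
        | zero =>
          intro i j hi hj
          have hje : j = ⟨(i : ℕ) + 1, by have := j.isLt; omega⟩ := Fin.ext (by simp; omega)
          rw [hje]
          exact hstep (i : ℕ) (by have := j.isLt; omega) hi
        | succ d ih =>
          intro i j hi hj
          have h1 := ih i ⟨(i : ℕ) + d + 1, by have := j.isLt; omega⟩ hi rfl
          have h2 := hstep ((i : ℕ) + d + 1) (by have := j.isLt; omega) (by omega)
          have hje : j = ⟨(i : ℕ) + d + 1 + 1, by have := j.isLt; omega⟩ :=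
            Fin.ext (by simp; omega)
          rw [hje]
          exact lt_trans h1 h2
      intro i j hi hij
      exact key ((j : ℕ) - (i : ℕ) - 1) i j hi (by have := Fin.lt_def.mp hij; omega)
    set S : Finset V :=
      (Finset.Ioi (⟨n - k, by omega⟩ : Fin n)).image (fun i => ω.symm (σ i)) with hSdef
    have hinj : Function.Injective (fun i : Fin n => ω.symm (σ i)) :=
      fun a b h => σ.injective (ω.symm.injective h)
    have hScard : S.card = k - 1 := by
      rw [hSdef, Finset.card_image_of_injective _ hinj, Fin.card_Ioi]
      simp
      omega
    have hSmem : ∀ v, v ∈ S ↔ ∃ i : Fin n, n - k < (i : ℕ) ∧ ω.symm (σ i) = v := by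
      intro v
      rw [hSdef]
      simp only [Finset.mem_image, Finset.mem_Ioi]
      constructor
      · rintro ⟨i, hi, he⟩; exact ⟨i, Fin.lt_def.mp hi, he⟩
      · rintro ⟨i, hi, he⟩; exact ⟨i, Fin.lt_def.mpr hi, he⟩
    have hSsink : ∀ v ∈ S, IsSink r v := by
      intro v hv
      obtain ⟨i, hi, rfl⟩ := (hSmem v).mp hv
      intro u hu
      have htrans : Relation.TransGen r (ω.symm (σ i)) (ω.symm (σ (σ.symm (ω u)))) := by
        rw [Equiv.apply_symm_apply, Equiv.symm_apply_apply]
        exact Relation.TransGen.single hu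
      have hij := hLE _ _ htrans
      have := hmono i _ (le_of_lt hi) hij
      have hd := hdec _ _ (Relation.TransGen.single hu : Relation.TransGen r (ω.symm (σ i)) u)
      rw [Equiv.apply_symm_apply] at hd
      have he : σ (σ.symm (ω u)) = ω u := Equiv.apply_symm_apply _ _
      rw [Fin.lt_def] at this
      rw [he] at this
      omega
    have hS0 : ∀ v ∈ S, (ω v : ℕ) ≠ 0 := by
      intro v hv
      obtain ⟨i, hi, rfl⟩ := (hSmem v).mp hv
      rw [Equiv.apply_symm_apply]
      have := hmono ⟨n - k, by omega⟩ i (le_refl _) (Fin.lt_def.mpr hi)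
      rw [Fin.lt_def] at this
      omega
    refine ⟨S, ⟨hSsink, hS0, hScard, fun i hi => (hSmem _).mpr ⟨i, hi, rfl⟩⟩, ?_⟩
    rintro S' ⟨-, -, hS'card, hS'mem⟩
    have hsub : S ⊆ S' := by
      intro v hv
      obtain ⟨i, hi, rfl⟩ := (hSmem v).mp hv
      exact hS'mem i hi
    exact (Finset.eq_of_subset_of_card_le hsub (by omega)).symm
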